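/- Let (z_k)_{k ∈ ℕ} be a sequence of complex numbers with 0 < |z_k| < 1 for all k, such that ∑_{k} (1 − |z_k|) < ∞. Then for every z ∈ ℂ with |z| < 1, the infinite product ∏_{k} (conj(z_k)/|z_k|) · (z_k − z)/(1 − conj(z_k)·z) is multipliable (i.e. the partial products converge in ℂ). -/

import Mathlib

/-! Each Blaschke factor satisfies `‖b_a(z) - 1‖ ≤ (1 + ‖z‖) / (1 - ‖z‖) * (1 - ‖a‖)`, because
`b_a(z) - 1 = (‖a‖ - 1)(‖a‖ + conj a z) / (‖a‖ (1 - conj a z))` and `1 - ‖z‖ ≤ ‖1 - conj a z‖`.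
The Blaschke condition therefore makes `∑ ‖b_{z_k}(z) - 1‖` converge, and a product `∏ (1 + u_k)`
with `∑ ‖u_k‖ < ∞` converges in any complete normed ring. -/

open ComplexConjugate

noncomputable def blaschkeFactor (a z : ℂ) : ℂ :=
  (conj a / (‖a‖ : ℂ)) * ((a - z) / (1 - conj a * z))

lemma one_sub_norm_le_norm_one_sub_conj_mul {a z : ℂ} (ha : ‖a‖ ≤ 1) :
    1 - ‖z‖ ≤ ‖1 - conj a * z‖ :=
  calc 1 - ‖z‖ ≤ ‖(1 : ℂ)‖ - ‖conj a * z‖ := by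
        rw [norm_one, norm_mul, Complex.norm_conj]
        gcongr
        exact mul_le_of_le_one_left (norm_nonneg z) ha
    _ ≤ ‖1 - conj a * z‖ := norm_sub_norm_le _ _

lemma one_sub_conj_mul_ne_zero {a z : ℂ} (ha : ‖a‖ ≤ 1) (hz : ‖z‖ < 1) :
    1 - conj a * z ≠ 0 :=
  norm_pos_iff.mp <| (sub_pos.mpr hz).trans_le (one_sub_norm_le_norm_one_sub_conj_mul ha)

lemma blaschkeFactor_sub_one {a z : ℂ} (ha : a ≠ 0) (hden : 1 - conj a * z ≠ 0) :
    blaschkeFactor a z - 1 =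
      ((‖a‖ : ℂ) - 1) * (‖a‖ + conj a * z) / (‖a‖ * (1 - conj a * z)) := by
  have hconj : conj a * a = (‖a‖ : ℂ) ^ 2 := Complex.conj_mul' a
  have hr : (‖a‖ : ℂ) ≠ 0 := by simpa using ha
  rw [blaschkeFactor, div_mul_div_comm, div_sub_one (mul_ne_zero hr hden)]
  congr 1
  linear_combination hconj

lemma norm_blaschkeFactor_sub_one_le {a z : ℂ} (ha₀ : 0 < ‖a‖) (ha₁ : ‖a‖ < 1)
    (hz : ‖z‖ < 1) :
    ‖blaschkeFactor a z - 1‖ ≤ (1 + ‖z‖) / (1 - ‖z‖) * (1 - ‖a‖) := by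
  have hden := one_sub_conj_mul_ne_zero ha₁.le hz
  have hnum : ‖(‖a‖ : ℂ) + conj a * z‖ ≤ ‖a‖ * (1 + ‖z‖) :=
    calc ‖(‖a‖ : ℂ) + conj a * z‖ ≤ ‖(‖a‖ : ℂ)‖ + ‖conj a * z‖ := norm_add_le _ _
      _ = ‖a‖ * (1 + ‖z‖) := by
        rw [norm_mul, Complex.norm_conj, Complex.norm_real, norm_norm]
        ring
  have hlow := one_sub_norm_le_norm_one_sub_conj_mul (z := z) ha₁.le
  have hz' : 0 < 1 - ‖z‖ := sub_pos.mpr hz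
  calc ‖blaschkeFactor a z - 1‖
      = (1 - ‖a‖) * ‖(‖a‖ : ℂ) + conj a * z‖ / (‖a‖ * ‖1 - conj a * z‖) := by
        rw [blaschkeFactor_sub_one (norm_pos_iff.mp ha₀) hden, norm_div, norm_mul, norm_mul,
          ← Complex.ofReal_one, ← Complex.ofReal_sub, Complex.norm_real, Complex.norm_real,
          Real.norm_eq_abs, Real.norm_eq_abs, abs_of_nonpos (by linarith), abs_of_pos ha₀, neg_sub]
    _ ≤ (1 - ‖a‖) * (‖a‖ * (1 + ‖z‖)) / (‖a‖ * (1 - ‖z‖)) := by gcongr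
    _ = (1 + ‖z‖) / (1 - ‖z‖) * (1 - ‖a‖) := by field_simp

theorem stmt_17 (zs : ℕ → ℂ)
    (hzs : ∀ k, 0 < ‖zs k‖ ∧ ‖zs k‖ < 1)
    (hsum : Summable (fun k => 1 - ‖zs k‖)) :
    ∀ z : ℂ, ‖z‖ < 1 →
      Multipliable (fun k => ((starRingEnd ℂ) (zs k) / (‖zs k‖ : ℂ)) *
        ((zs k - z) / (1 - (starRingEnd ℂ) (zs k) * z))) := by
  intro z hz
  have hbound : Summable fun k => ‖blaschkeFactor (zs k) z - 1‖ :=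
    (hsum.mul_left _).of_nonneg_of_le (fun _ => norm_nonneg _)
      fun k => norm_blaschkeFactor_sub_one_le (hzs k).1 (hzs k).2 hz
  simpa only [add_sub_cancel, blaschkeFactor] using multipliable_one_add_of_summable hbound
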